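/- arXiv:2509.09566 — 2 statements merged into one kernel-verified Lean document; each statement's English description precedes it below -/
import Mathlib

section
/- Let m : ℝ^d → (0,∞) be a smooth positive density, E, S : ℝ^d → ℝ smooth, J : ℝ^d → Mat(d,ℝ) smooth with J(x) antisymmetric and J(x)∇S(x) = 0 for all x, and K : ℝ^d → Mat(d,ℝ) smooth with K(x) symmetric and K(x)∇E(x) = 0 for all x. Assume the unimodularity condition: div(m J∇g) = 0 on ℝ^d for every smooth g. Then for every smooth h : ℝ → ℝ and every smooth compactly supported f : ℝ^d → ℝ, ∫_{ℝ^d} [⟨∇E, J∇f⟩ + ⟨∇S, K∇f⟩ + div_m(K∇f)](x) · h(E(x)) e^{S(x)} m(x) dx = 0. That is, every measure of the form h(E) e^{S} m dx annihilates the generator L of the GENERIC SDE, so all such measures are invariant. -/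
open MeasureTheory Real Matrix

/-- Gradient of `f : ℝ^d → ℝ` w.r.t. the standard inner product. -/
noncomputable def grad {d : ℕ} (f : (Fin d → ℝ) → ℝ) (x : Fin d → ℝ) : Fin d → ℝ :=
  fun i => fderiv ℝ f x (Pi.single i 1)

/-- Partial derivative `∂_{x_k} g (x)`. -/
noncomputable def pd {d : ℕ} (k : Fin d) (g : (Fin d → ℝ) → ℝ) (x : Fin d → ℝ) : ℝ :=
  fderiv ℝ g x (Pi.single k 1)

/-- Divergence of a vector field on ℝ^d: `div X = Σ_k ∂_{x_k} X_k`. -/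
noncomputable def vdiv {d : ℕ} (X : (Fin d → ℝ) → (Fin d → ℝ)) (x : Fin d → ℝ) : ℝ :=
  ∑ k, fderiv ℝ (fun y => X y k) x (Pi.single k 1)

/-!
Let `H` be a primitive of `h` and `G = H ∘ E`, so that `∇G = h(E) ∇E` and, by unimodularity,
`div (m J∇G) = 0`. The compactly supported field `Z = e^S (h(E) m K∇f - f m J∇G)` then has
divergence `(Lf) h(E) e^S m`: in the product rule the terms `⟨∇E, K∇f⟩` and `⟨∇S, J∇E⟩` vanish
because `K` is symmetric with `K∇E = 0` and `J` is antisymmetric with `J∇S = 0`, while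
antisymmetry turns `⟨∇f, J∇E⟩` into `-⟨∇E, J∇f⟩`. A compactly supported divergence integrates
to zero.
-/

theorem ContDiff.integral_fderiv_apply_eq_zero {E F : Type*}
    [NormedAddCommGroup E] [NormedSpace ℝ E] [FiniteDimensional ℝ E] [MeasurableSpace E]
    [BorelSpace E] [NormedAddCommGroup F] [NormedSpace ℝ F] {μ : Measure E} [μ.IsAddHaarMeasure]
    {g : E → F} (hg : ContDiff ℝ 1 g) (hgc : HasCompactSupport g) (v : E) :
    ∫ x, fderiv ℝ g x v ∂μ = 0 := by
  have hg' : Continuous fun x => fderiv ℝ g x v := hg.continuous_fderiv_apply one_ne_zero |>.comp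
    (continuous_id.prodMk continuous_const)
  simpa using integral_smul_fderiv_eq_neg_fderiv_smul_of_integrable (μ := μ) (𝕜 := ℝ)
    (f := fun _ => (1 : ℝ)) (g := g) (v := v) (by simp)
    (by simpa using hg'.integrable_of_hasCompactSupport (hgc.fderiv_apply ℝ v))
    (by simpa using hg.continuous.integrable_of_hasCompactSupport hgc)
    (fun _ _ => differentiableAt_const _) (fun x _ => hg.differentiable one_ne_zero x)

namespace Matrix

variable {n R : Type*} [Fintype n]

theorem IsSymm.dotProduct_mulVec_comm [CommSemiring R] {M : Matrix n n R} (hM : M.IsSymm)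
    (v w : n → R) : v ⬝ᵥ M *ᵥ w = w ⬝ᵥ M *ᵥ v := by
  rw [dotProduct_mulVec, ← vecMul_transpose, hM.eq, dotProduct_comm]

theorem dotProduct_mulVec_comm_of_transpose_eq_neg [CommRing R] {M : Matrix n n R}
    (hM : Mᵀ = -M) (v w : n → R) : v ⬝ᵥ M *ᵥ w = -(w ⬝ᵥ M *ᵥ v) := by
  rw [← vecMul_transpose M v, hM, vecMul_neg, dotProduct_neg, neg_neg, dotProduct_mulVec,
    dotProduct_comm]

end Matrix

section VectorCalculus

variable {d : ℕ}

theorem grad_mul {φ ψ : (Fin d → ℝ) → ℝ} {x : Fin d → ℝ} (hφ : DifferentiableAt ℝ φ x)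
    (hψ : DifferentiableAt ℝ ψ x) :
    grad (fun y => φ y * ψ y) x = φ x • grad ψ x + ψ x • grad φ x := by
  ext i
  simp [grad, fderiv_fun_mul hφ hψ]

theorem HasDerivAt.grad_comp {g : ℝ → ℝ} {g' : ℝ} {φ : (Fin d → ℝ) → ℝ} {x : Fin d → ℝ}
    (hg : HasDerivAt g g' (φ x)) (hφ : DifferentiableAt ℝ φ x) :
    grad (fun y => g (φ y)) x = g' • grad φ x := by
  ext i
  change fderiv ℝ (g ∘ φ) x _ = _
  simp [(hg.comp_hasFDerivAt x hφ.hasFDerivAt).fderiv, grad]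

theorem ContDiff.grad {f : (Fin d → ℝ) → ℝ} (hf : ContDiff ℝ (⊤ : ℕ∞) f) :
    ContDiff ℝ (⊤ : ℕ∞) (grad f) :=
  contDiff_pi.2 fun _ => (hf.fderiv_right le_rfl).clm_apply contDiff_const

theorem HasCompactSupport.grad {f : (Fin d → ℝ) → ℝ} (hf : HasCompactSupport f) :
    HasCompactSupport (grad f) :=
  (hf.fderiv ℝ).comp_left (g := fun (L : (Fin d → ℝ) →L[ℝ] ℝ) i => L (Pi.single i 1)) rfl

theorem ContDiff.mulVec {n : WithTop ℕ∞} {M : (Fin d → ℝ) → Matrix (Fin d) (Fin d) ℝ}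
    {v : (Fin d → ℝ) → Fin d → ℝ} (hM : ∀ i j, ContDiff ℝ n fun x => M x i j)
    (hv : ContDiff ℝ n v) : ContDiff ℝ n fun x => M x *ᵥ v x :=
  contDiff_pi.2 fun i =>
    ContDiff.sum (s := Finset.univ) fun j _ => (hM i j).mul (contDiff_pi.1 hv j)

theorem HasCompactSupport.mulVec {M : (Fin d → ℝ) → Matrix (Fin d) (Fin d) ℝ}
    {v : (Fin d → ℝ) → Fin d → ℝ} (hv : HasCompactSupport v) :
    HasCompactSupport fun x => M x *ᵥ v x :=
  hv.mono fun x hx h0 => hx (by simp [show v x = 0 from h0])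

theorem vdiv_sub {X Y : (Fin d → ℝ) → Fin d → ℝ} {x : Fin d → ℝ} (hX : DifferentiableAt ℝ X x)
    (hY : DifferentiableAt ℝ Y x) : vdiv (X - Y) x = vdiv X x - vdiv Y x := by
  simp only [vdiv, ← Finset.sum_sub_distrib]
  refine Finset.sum_congr rfl fun k _ => ?_
  rw [show (fun y => (X - Y) y k) = fun y => X y k - Y y k from rfl,
    fderiv_fun_sub (differentiableAt_pi.1 hX k) (differentiableAt_pi.1 hY k)]
  rfl

theorem vdiv_smul {φ : (Fin d → ℝ) → ℝ} {X : (Fin d → ℝ) → Fin d → ℝ} {x : Fin d → ℝ}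
    (hφ : DifferentiableAt ℝ φ x) (hX : DifferentiableAt ℝ X x) :
    vdiv (fun y => φ y • X y) x = grad φ x ⬝ᵥ X x + φ x * vdiv X x := by
  simp only [vdiv, grad, dotProduct, Finset.mul_sum, ← Finset.sum_add_distrib]
  refine Finset.sum_congr rfl fun k _ => ?_
  rw [show (fun y => (φ y • X y) k) = fun y => φ y * X y k from rfl,
    fderiv_fun_mul hφ (differentiableAt_pi.1 hX k)]
  simp only [_root_.add_apply, _root_.smul_apply, smul_eq_mul]
  ring

theorem integral_vdiv_eq_zero {X : (Fin d → ℝ) → Fin d → ℝ} (hX : ContDiff ℝ 1 X)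
    (hXc : HasCompactSupport X) : ∫ x, vdiv X x = 0 := by
  have hXk : ∀ k, ContDiff ℝ 1 fun x => X x k := contDiff_pi.1 hX
  have hXkc : ∀ k, HasCompactSupport fun x => X x k := fun k =>
    hXc.comp_left (g := fun v : Fin d → ℝ => v k) rfl
  have hint : ∀ k, Integrable fun x => fderiv ℝ (fun y => X y k) x (Pi.single k 1) := fun k =>
    ((hXk k).continuous_fderiv_apply one_ne_zero).comp (continuous_id.prodMk continuous_const)
      |>.integrable_of_hasCompactSupport ((hXkc k).fderiv_apply ℝ _)
  unfold vdiv
  rw [integral_finsetSum _ fun k _ => hint k]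
  exact Finset.sum_eq_zero fun k _ => (hXk k).integral_fderiv_apply_eq_zero (hXkc k) _

end VectorCalculus

theorem ContDiff.exists_hasDerivAt {h : ℝ → ℝ} (hh : ContDiff ℝ (⊤ : ℕ∞) h) :
    ∃ H : ℝ → ℝ, ContDiff ℝ (⊤ : ℕ∞) H ∧ ∀ t, HasDerivAt H (h t) t := by
  have hH : ∀ t, HasDerivAt (fun t => ∫ s in (0 : ℝ)..t, h s) (h t) t := fun t =>
    (hh.continuous.integral_hasStrictDerivAt 0 t).hasDerivAt
  refine ⟨_, contDiff_infty_iff_deriv.2 ⟨fun t => (hH t).differentiableAt, ?_⟩, hH⟩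
  rwa [funext fun t => (hH t).deriv]

section Generic

variable {d : ℕ} {m E S f G : (Fin d → ℝ) → ℝ} {J K : (Fin d → ℝ) → Matrix (Fin d) (Fin d) ℝ}
  {h : ℝ → ℝ}

variable (m E S f G J K h) in
noncomputable def genericFlux : (Fin d → ℝ) → Fin d → ℝ :=
  (fun y => (h (E y) * exp (S y)) • (m y • K y *ᵥ grad f y))
    - fun y => (f y * exp (S y)) • (m y • J y *ᵥ grad G y)

theorem vdiv_genericFlux (hm : ContDiff ℝ (⊤ : ℕ∞) m) (hE : ContDiff ℝ (⊤ : ℕ∞) E)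
    (hS : ContDiff ℝ (⊤ : ℕ∞) S) (hf : ContDiff ℝ (⊤ : ℕ∞) f) (hG : ContDiff ℝ (⊤ : ℕ∞) G)
    (hJ : ∀ i j, ContDiff ℝ (⊤ : ℕ∞) fun x => J x i j)
    (hK : ∀ i j, ContDiff ℝ (⊤ : ℕ∞) fun x => K x i j) (hh : ContDiff ℝ (⊤ : ℕ∞) h)
    {x : Fin d → ℝ} (hmx : m x ≠ 0) (hJanti : (J x)ᵀ = -J x) (hJS : J x *ᵥ grad S x = 0)
    (hKsym : (K x)ᵀ = K x) (hKE : K x *ᵥ grad E x = 0) (hGE : grad G x = h (E x) • grad E x)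
    (hGuni : vdiv (fun y => m y • J y *ᵥ grad G y) x = 0) :
    vdiv (genericFlux m E S f G J K h) x =
      (grad E x ⬝ᵥ J x *ᵥ grad f x + grad S x ⬝ᵥ K x *ᵥ grad f x
        + vdiv (fun y => m y • K y *ᵥ grad f y) x / m x) * (h (E x) * exp (S x) * m x) := by
  have dx : ∀ {F : Type} [NormedAddCommGroup F] [NormedSpace ℝ F] {φ : (Fin d → ℝ) → F},
      ContDiff ℝ (⊤ : ℕ∞) φ → DifferentiableAt ℝ φ x := fun hφ => hφ.differentiable (by simp) x
  have hhE : HasDerivAt h (deriv h (E x)) (E x) := (hh.differentiable (by simp) _).hasDerivAt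
  have hdhE : DifferentiableAt ℝ (fun y => h (E y)) x := dx (hh.comp hE)
  have hdexpS : DifferentiableAt ℝ (fun y => exp (S y)) x := dx (contDiff_exp.comp hS)
  have hexpS := (hasDerivAt_exp (S x)).grad_comp (dx hS)
  have hKf : ContDiff ℝ (⊤ : ℕ∞) fun y => m y • K y *ᵥ grad f y := hm.smul (hf.grad.mulVec hK)
  have hJG : ContDiff ℝ (⊤ : ℕ∞) fun y => m y • J y *ᵥ grad G y := hm.smul (hG.grad.mulVec hJ)
  have hhEexpS : ContDiff ℝ (⊤ : ℕ∞) fun y => h (E y) * exp (S y) :=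
    (hh.comp hE).mul (contDiff_exp.comp hS)
  have hfexpS : ContDiff ℝ (⊤ : ℕ∞) fun y => f y * exp (S y) := hf.mul (contDiff_exp.comp hS)
  have hflux₁ : DifferentiableAt ℝ (fun y => (h (E y) * exp (S y)) • (m y • K y *ᵥ grad f y)) x :=
    dx (hhEexpS.smul hKf)
  have hflux₂ : DifferentiableAt ℝ (fun y => (f y * exp (S y)) • (m y • J y *ᵥ grad G y)) x :=
    dx (hfexpS.smul hJG)
  have hEKf : grad E x ⬝ᵥ K x *ᵥ grad f x = 0 := by
    rw [IsSymm.dotProduct_mulVec_comm hKsym, hKE, dotProduct_zero]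
  have hSJE : grad S x ⬝ᵥ J x *ᵥ grad E x = 0 := by
    rw [dotProduct_mulVec_comm_of_transpose_eq_neg hJanti, hJS, dotProduct_zero, neg_zero]
  have hfJE : grad f x ⬝ᵥ J x *ᵥ grad E x = -(grad E x ⬝ᵥ J x *ᵥ grad f x) :=
    dotProduct_mulVec_comm_of_transpose_eq_neg hJanti _ _
  rw [genericFlux, vdiv_sub hflux₁ hflux₂,
    vdiv_smul (dx hhEexpS) (dx hKf), vdiv_smul (dx hfexpS) (dx hJG), hGuni,
    grad_mul hdhE hdexpS, grad_mul (dx hf) hdexpS, hhE.grad_comp (dx hE), hexpS, hGE]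
  simp only [mulVec_smul, dotProduct_smul, add_dotProduct, smul_dotProduct, smul_eq_mul,
    hEKf, hSJE, hfJE]
  field_simp
  ring

theorem contDiff_genericFlux (hm : ContDiff ℝ (⊤ : ℕ∞) m) (hE : ContDiff ℝ (⊤ : ℕ∞) E)
    (hS : ContDiff ℝ (⊤ : ℕ∞) S) (hf : ContDiff ℝ (⊤ : ℕ∞) f) (hG : ContDiff ℝ (⊤ : ℕ∞) G)
    (hJ : ∀ i j, ContDiff ℝ (⊤ : ℕ∞) fun x => J x i j)
    (hK : ∀ i j, ContDiff ℝ (⊤ : ℕ∞) fun x => K x i j) (hh : ContDiff ℝ (⊤ : ℕ∞) h) :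
    ContDiff ℝ (⊤ : ℕ∞) (genericFlux m E S f G J K h) :=
  (((hh.comp hE).mul (contDiff_exp.comp hS)).smul (hm.smul (hf.grad.mulVec hK))).sub
    ((hf.mul (contDiff_exp.comp hS)).smul (hm.smul (hG.grad.mulVec hJ)))

theorem hasCompactSupport_genericFlux (hf : HasCompactSupport f) :
    HasCompactSupport (genericFlux m E S f G J K h) := by
  have hKf : HasCompactSupport fun y => K y *ᵥ grad f y := hf.grad.mulVec
  have hfexpS : HasCompactSupport fun y => f y * exp (S y) := hf.mul_right
  exact ((hKf.smul_left (f := m)).smul_left (f := fun y => h (E y) * exp (S y))).sub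
    (hfexpS.smul_right (f' := fun y => m y • J y *ᵥ grad G y))

end Generic

/-- every measure of the form `h(E) e^S m dx` annihilates the GENERIC
generator `Lf = ⟨∇E, J∇f⟩ + ⟨∇S, K∇f⟩ + div_m(K∇f)`, hence is invariant. -/
theorem invariance_of_hE_expS_measures {d : ℕ}
    (m : (Fin d → ℝ) → ℝ) (E S : (Fin d → ℝ) → ℝ)
    (J K : (Fin d → ℝ) → Matrix (Fin d) (Fin d) ℝ)
    (hm : ContDiff ℝ (⊤ : ℕ∞) m) (hmpos : ∀ x, 0 < m x)
    (hE : ContDiff ℝ (⊤ : ℕ∞) E) (hS : ContDiff ℝ (⊤ : ℕ∞) S)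
    (hJ : ∀ i j, ContDiff ℝ (⊤ : ℕ∞) fun x => J x i j)
    (hK : ∀ i j, ContDiff ℝ (⊤ : ℕ∞) fun x => K x i j)
    (hJanti : ∀ x, (J x)ᵀ = -J x)
    (hJS : ∀ x, (J x).mulVec (grad S x) = 0)
    (hKsym : ∀ x, (K x)ᵀ = K x)
    (hKE : ∀ x, (K x).mulVec (grad E x) = 0)
    (huni : ∀ g : (Fin d → ℝ) → ℝ, ContDiff ℝ (⊤ : ℕ∞) g →
      ∀ x, vdiv (fun y k => m y * (J y).mulVec (grad g y) k) x = 0)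
    (h : ℝ → ℝ) (hh : ContDiff ℝ (⊤ : ℕ∞) h)
    (f : (Fin d → ℝ) → ℝ)
    (hf : ContDiff ℝ (⊤ : ℕ∞) f) (hfc : HasCompactSupport f) :
    ∫ x, (grad E x ⬝ᵥ (J x).mulVec (grad f x)
          + grad S x ⬝ᵥ (K x).mulVec (grad f x)
          + vdiv (fun y k => m y * (K y).mulVec (grad f y) k) x / m x)
        * (h (E x) * Real.exp (S x) * m x) = 0 := by
  obtain ⟨H, hH, hHh⟩ := hh.exists_hasDerivAt
  have hG : ContDiff ℝ (⊤ : ℕ∞) fun y => H (E y) := hH.comp hE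
  have hGE : ∀ x, grad (fun y => H (E y)) x = h (E x) • grad E x := fun x =>
    (hHh (E x)).grad_comp (hE.differentiable (by simp) x)
  calc _ = ∫ x, vdiv (genericFlux m E S f (fun y => H (E y)) J K h) x :=
        integral_congr_ae <| ae_of_all _ fun x => (vdiv_genericFlux hm hE hS hf hG hJ hK hh
          (hmpos x).ne' (hJanti x) (hJS x) (hKsym x) (hKE x) (hGE x) (huni _ hG x)).symm
    _ = 0 := integral_vdiv_eq_zero ((contDiff_genericFlux hm hE hS hf hG hJ hK hh).of_le
        (by simp)) (hasCompactSupport_genericFlux hfc)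
end

section
/- Let m : ℝ^d → (0,∞) be a smooth positive density and let J : ℝ^d → Mat(d,ℝ) be a smooth matrix field with J(x) antisymmetric for all x, satisfying div(m J∇f) = 0 on ℝ^d for every smooth f. Let g : ℝ^d → ℝ be smooth and nowhere vanishing, and assume the density g·m also satisfies the unimodularity condition: div(g m J∇f) = 0 for every smooth f. Then ⟨∇g(x), J(x)∇f(x)⟩ = 0 for every smooth f and every x; equivalently, J(x)∇g(x) = 0 for all x, i.e. g is a Casimir of the Poisson structure J. Hence an invariant density for J is unique up to multiplication by a nowhere-vanishing Casimir function. -/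
open MeasureTheory Real Matrix

/-! By the Leibniz rule `div (g X) = ⟨∇g, X⟩ + g div X` applied to `X = m J∇f`, the two
unimodularity conditions give `m ⟨∇g, J∇f⟩ = 0`, and `m > 0`. Choosing for `f` the coordinate
functions shows that `∇g` is annihilated by `Jᵀ = -J`. -/

theorem contDiff_grad_apply {d : ℕ} {f : (Fin d → ℝ) → ℝ} (hf : ContDiff ℝ (⊤ : ℕ∞) f)
    (j : Fin d) : ContDiff ℝ (⊤ : ℕ∞) fun y => grad f y j :=
  (hf.fderiv_right (m := (⊤ : ℕ∞)) le_rfl).clm_apply contDiff_const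

theorem grad_apply_coord {d : ℕ} (i : Fin d) (y : Fin d → ℝ) :
    grad (fun y : Fin d → ℝ => y i) y = Pi.single i 1 := by
  funext j
  rw [grad, fderiv_apply differentiableAt_id i, fderiv_fun_id]
  simp [Pi.single_apply, eq_comm]

theorem vdiv_mul {d : ℕ} {g : (Fin d → ℝ) → ℝ} {X : (Fin d → ℝ) → Fin d → ℝ}
    {x : Fin d → ℝ} (hg : DifferentiableAt ℝ g x)
    (hX : ∀ k, DifferentiableAt ℝ (fun y => X y k) x) :
    vdiv (fun y k => g y * X y k) x = grad g x ⬝ᵥ X x + g x * vdiv X x := by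
  simp only [vdiv, dotProduct, Finset.mul_sum, ← Finset.sum_add_distrib]
  refine Finset.sum_congr rfl fun k _ => ?_
  rw [fderiv_fun_mul hg (hX k)]
  simp only [grad, _root_.add_apply, _root_.smul_apply, smul_eq_mul]
  ring

theorem contDiff_mul_mulVec_grad_apply {d : ℕ} {m f : (Fin d → ℝ) → ℝ}
    {J : (Fin d → ℝ) → Matrix (Fin d) (Fin d) ℝ} (hm : ContDiff ℝ (⊤ : ℕ∞) m)
    (hJ : ∀ i j, ContDiff ℝ (⊤ : ℕ∞) fun x => J x i j) (hf : ContDiff ℝ (⊤ : ℕ∞) f)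
    (k : Fin d) : ContDiff ℝ (⊤ : ℕ∞) fun y => m y * (J y *ᵥ grad f y) k := by
  simp only [mulVec, dotProduct]
  exact hm.mul (ContDiff.sum fun j _ => (hJ k j).mul (contDiff_grad_apply hf j))

theorem Matrix.mulVec_eq_zero_of_transpose_eq_neg {n R : Type*} [Fintype n] [DecidableEq n]
    [CommRing R] {A : Matrix n n R} (hA : Aᵀ = -A) {v : n → R}
    (h : ∀ i, v ⬝ᵥ A *ᵥ Pi.single i 1 = 0) : A *ᵥ v = 0 := by
  funext i
  have hi := h i
  rw [dotProduct_mulVec, dotProduct_single_one, ← mulVec_transpose, hA, neg_mulVec,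
    Pi.neg_apply, neg_eq_zero] at hi
  exact hi

theorem invariant_density_unique_up_to_casimir_general {d : ℕ}
    (m g : (Fin d → ℝ) → ℝ) (J : (Fin d → ℝ) → Matrix (Fin d) (Fin d) ℝ)
    (hm : ContDiff ℝ (⊤ : ℕ∞) m) (hmpos : ∀ x, 0 < m x)
    (hJ : ∀ i j, ContDiff ℝ (⊤ : ℕ∞) fun x => J x i j)
    (hJanti : ∀ x, (J x)ᵀ = -J x)
    (huni : ∀ f : (Fin d → ℝ) → ℝ, ContDiff ℝ (⊤ : ℕ∞) f →
      ∀ x, vdiv (fun y k => m y * (J y).mulVec (grad f y) k) x = 0)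
    (hg : ContDiff ℝ (⊤ : ℕ∞) g)
    (hunig : ∀ f : (Fin d → ℝ) → ℝ, ContDiff ℝ (⊤ : ℕ∞) f →
      ∀ x, vdiv (fun y k => g y * m y * (J y).mulVec (grad f y) k) x = 0) :
    (∀ f : (Fin d → ℝ) → ℝ, ContDiff ℝ (⊤ : ℕ∞) f →
      ∀ x, grad g x ⬝ᵥ (J x).mulVec (grad f x) = 0) ∧
    (∀ x, (J x).mulVec (grad g x) = 0) := by
  have hcasimir : ∀ f : (Fin d → ℝ) → ℝ, ContDiff ℝ (⊤ : ℕ∞) f →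
      ∀ x, grad g x ⬝ᵥ (J x).mulVec (grad f x) = 0 := by
    intro f hf x
    have hX : ∀ k, DifferentiableAt ℝ (fun y => m y * (J y *ᵥ grad f y) k) x := fun k =>
      ((contDiff_mul_mulVec_grad_apply hm hJ hf k).differentiable (by simp)).differentiableAt
    have h := hunig f hf x
    simp only [mul_assoc] at h
    rw [vdiv_mul ((hg.differentiable (by simp)).differentiableAt) hX, huni f hf x, mul_zero,
      add_zero] at h
    have hm_mul : m x * (grad g x ⬝ᵥ J x *ᵥ grad f x) = 0 := by
      rw [← smul_eq_mul, ← dotProduct_smul]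
      exact h
    exact (mul_eq_zero_iff_left (hmpos x).ne').mp hm_mul
  refine ⟨hcasimir, fun x => mulVec_eq_zero_of_transpose_eq_neg (hJanti x) fun i => ?_⟩
  simpa only [grad_apply_coord] using hcasimir (fun y => y i) (contDiff_apply ℝ ℝ i) x

/-- if `m` and `g·m` are both invariant (unimodular) densities for an
antisymmetric `J`, with `g` nowhere vanishing, then `g` is a Casimir:
`⟨∇g, J∇f⟩ = 0` for all smooth `f`, equivalently `J∇g = 0`. -/
theorem invariant_density_unique_up_to_casimir {d : ℕ}
    (m g : (Fin d → ℝ) → ℝ) (J : (Fin d → ℝ) → Matrix (Fin d) (Fin d) ℝ)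
    (hm : ContDiff ℝ (⊤ : ℕ∞) m) (hmpos : ∀ x, 0 < m x)
    (hJ : ∀ i j, ContDiff ℝ (⊤ : ℕ∞) fun x => J x i j)
    (hJanti : ∀ x, (J x)ᵀ = -J x)
    (huni : ∀ f : (Fin d → ℝ) → ℝ, ContDiff ℝ (⊤ : ℕ∞) f →
      ∀ x, vdiv (fun y k => m y * (J y).mulVec (grad f y) k) x = 0)
    (hg : ContDiff ℝ (⊤ : ℕ∞) g) (hgne : ∀ x, g x ≠ 0)
    (hunig : ∀ f : (Fin d → ℝ) → ℝ, ContDiff ℝ (⊤ : ℕ∞) f →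
      ∀ x, vdiv (fun y k => g y * m y * (J y).mulVec (grad f y) k) x = 0) :
    (∀ f : (Fin d → ℝ) → ℝ, ContDiff ℝ (⊤ : ℕ∞) f →
      ∀ x, grad g x ⬝ᵥ (J x).mulVec (grad f x) = 0) ∧
    (∀ x, (J x).mulVec (grad g x) = 0) :=
  invariant_density_unique_up_to_casimir_general m g J hm hmpos hJ hJanti huni hg hunig
end
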